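/- arXiv:2004.00162 — 2 statements merged into one kernel-verified Lean document; each statement's English description precedes it below -/
import Mathlib

section
/- Let G1 and G2 be independent random variables each following the standard Gumbel distribution (with CDF x ↦ exp(-exp(-x))). Then for any real numbers a1, a2, the probability that a1 + G1 ≥ a2 + G2 equals exp(a1) / (exp(a1) + exp(a2)). -/
open MeasureTheory ProbabilityTheory

/-- The standard Gumbel distribution on `ℝ`, with density `exp (-(x + exp (-x)))`
(and CDF `x ↦ exp (-exp (-x))`). -/
noncomputable def gumbel : Measure ℝ :=
  volume.withDensity fun x => ENNReal.ofReal (Real.exp (-(x + Real.exp (-x))))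

/-! By independence, `P(G₂ ≤ G₁ + c) = ∫ F(x + c) dgumbel(x)` with `F(t) = exp (-exp (-t))` the
Gumbel CDF. Against the density `exp (-(x + exp (-x)))` the integrand becomes
`exp (-(x + B exp (-x)))` with `B = 1 + exp (-c)`, the derivative of `exp (-(B exp (-x))) / B`,
which increases from `0` to `1 / B`. For `c = a₁ - a₂`, `1 / B = exp a₁ / (exp a₁ + exp a₂)`. -/

open Real Set Filter Topology

section NonnegDeriv

variable {g g' : ℝ → ℝ} {m n : ℝ}

theorem integrableOn_Iic_deriv_of_nonneg (hderiv : ∀ x, HasDerivAt g (g' x) x)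
    (hg' : ∀ x, 0 ≤ g' x) (hbot : Tendsto g atBot (𝓝 m)) (t : ℝ) :
    IntegrableOn g' (Iic t) := by
  have hint (a : ℝ) : IntervalIntegrable g' volume a t :=
    intervalIntegral.intervalIntegrable_deriv_of_nonneg
      (fun x _ ↦ (hderiv x).continuousAt.continuousWithinAt)
      (fun x _ ↦ hderiv x) (fun x _ ↦ hg' x)
  refine integrableOn_Iic_of_intervalIntegral_norm_tendsto (g t - m) t (fun a ↦ (hint a).1)
    tendsto_id ?_
  simp only [Real.norm_of_nonneg (hg' _),
    intervalIntegral.integral_eq_sub_of_hasDerivAt (fun x _ ↦ hderiv x) (hint _)]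
  exact tendsto_const_nhds.sub hbot

theorem integrable_deriv_of_nonneg (hderiv : ∀ x, HasDerivAt g (g' x) x)
    (hg' : ∀ x, 0 ≤ g' x) (hbot : Tendsto g atBot (𝓝 m)) (htop : Tendsto g atTop (𝓝 n)) :
    Integrable g' := by
  rw [← integrableOn_univ, ← Iic_union_Ioi (a := 0)]
  exact (integrableOn_Iic_deriv_of_nonneg hderiv hg' hbot 0).union
    (integrableOn_Ioi_deriv_of_nonneg' (fun x _ ↦ hderiv x) (fun x _ ↦ hg' x) htop)

theorem setLIntegral_Iic_ofReal_deriv_of_nonneg (hderiv : ∀ x, HasDerivAt g (g' x) x)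
    (hg' : ∀ x, 0 ≤ g' x) (hbot : Tendsto g atBot (𝓝 m)) (t : ℝ) :
    ∫⁻ x in Iic t, ENNReal.ofReal (g' x) = ENNReal.ofReal (g t - m) := by
  have hint := integrableOn_Iic_deriv_of_nonneg hderiv hg' hbot t
  rw [← ofReal_integral_eq_lintegral_ofReal hint (.of_forall hg'),
    integral_Iic_of_hasDerivAt_of_tendsto' (fun x _ ↦ hderiv x) hint hbot]

theorem lintegral_ofReal_deriv_of_nonneg (hderiv : ∀ x, HasDerivAt g (g' x) x)
    (hg' : ∀ x, 0 ≤ g' x) (hbot : Tendsto g atBot (𝓝 m)) (htop : Tendsto g atTop (𝓝 n)) :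
    ∫⁻ x, ENNReal.ofReal (g' x) = ENNReal.ofReal (n - m) := by
  have hint := integrable_deriv_of_nonneg hderiv hg' hbot htop
  rw [← ofReal_integral_eq_lintegral_ofReal hint (.of_forall hg'),
    integral_of_hasDerivAt_of_tendsto hderiv hint hbot htop]

end NonnegDeriv

theorem hasDerivAt_exp_neg_mul_exp_neg_div {b : ℝ} (hb : b ≠ 0) (x : ℝ) :
    HasDerivAt (fun x ↦ exp (-(b * exp (-x))) / b) (exp (-(x + b * exp (-x)))) x := by
  have hinner : HasDerivAt (fun x ↦ -(b * exp (-x))) (b * exp (-x)) x := by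
    simpa using ((hasDerivAt_id x).fun_neg.exp.const_mul b).fun_neg
  refine (hinner.exp.div_const b).congr_deriv ?_
  rw [neg_add, exp_add]
  field_simp

theorem tendsto_exp_neg_mul_exp_neg_atTop (b : ℝ) :
    Tendsto (fun x ↦ exp (-(b * exp (-x)))) atTop (𝓝 1) := by
  have hinner : Tendsto (fun x ↦ -(b * exp (-x))) atTop (𝓝 0) := by
    simpa using (tendsto_exp_neg_atTop_nhds_zero.const_mul b).neg
  exact tendsto_exp_nhds_zero_nhds_one.comp hinner

theorem tendsto_exp_neg_mul_exp_neg_atBot {b : ℝ} (hb : 0 < b) :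
    Tendsto (fun x ↦ exp (-(b * exp (-x)))) atBot (𝓝 0) :=
  tendsto_exp_atBot.comp <| tendsto_neg_atTop_atBot.comp <|
    (tendsto_exp_atTop.comp tendsto_neg_atBot_atTop).const_mul_atTop hb

theorem lintegral_exp_neg_add_mul_exp_neg {b : ℝ} (hb : 0 < b) :
    ∫⁻ x, ENNReal.ofReal (exp (-(x + b * exp (-x)))) = ENNReal.ofReal b⁻¹ := by
  simpa using lintegral_ofReal_deriv_of_nonneg (hasDerivAt_exp_neg_mul_exp_neg_div hb.ne')
    (fun _ ↦ (exp_pos _).le) ((tendsto_exp_neg_mul_exp_neg_atBot hb).div_const b)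
    ((tendsto_exp_neg_mul_exp_neg_atTop b).div_const b)

theorem gumbel_Iic (t : ℝ) : gumbel (Iic t) = ENNReal.ofReal (exp (-exp (-t))) := by
  rw [gumbel, withDensity_apply _ measurableSet_Iic]
  simpa using setLIntegral_Iic_ofReal_deriv_of_nonneg
    (hasDerivAt_exp_neg_mul_exp_neg_div one_ne_zero) (fun _ ↦ (exp_pos _).le)
    ((tendsto_exp_neg_mul_exp_neg_atBot one_pos).div_const 1) t

theorem lintegral_gumbel_Iic_add (c : ℝ) :
    ∫⁻ x, gumbel (Iic (x + c)) ∂gumbel = ENNReal.ofReal (1 + exp (-c))⁻¹ := by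
  have hdensity (x : ℝ) : exp (-(x + exp (-x))) * exp (-exp (-(x + c)))
      = exp (-(x + (1 + exp (-c)) * exp (-x))) := by
    rw [show -(x + c) = -x + -c by ring, exp_add, ← exp_add]
    ring_nf
  simp_rw [gumbel_Iic]
  rw [gumbel, lintegral_withDensity_eq_lintegral_mul₀ (by fun_prop) (by fun_prop)]
  simp only [Pi.mul_apply, ← ENNReal.ofReal_mul (exp_pos _).le, hdensity]
  exact lintegral_exp_neg_add_mul_exp_neg (by positivity)

theorem measure_le_add_eq_lintegral_of_indepFun {Ω : Type*} [MeasurableSpace Ω]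
    {μ : Measure Ω} [IsFiniteMeasure μ] {X Y : Ω → ℝ} (hX : Measurable X) (hY : Measurable Y)
    (hXY : IndepFun X Y μ) (c : ℝ) :
    μ {ω | Y ω ≤ X ω + c} = ∫⁻ x, μ.map Y (Iic (x + c)) ∂μ.map X := by
  have hS : MeasurableSet {p : ℝ × ℝ | p.2 ≤ p.1 + c} :=
    measurableSet_le measurable_snd (measurable_fst.add_const c)
  calc μ {ω | Y ω ≤ X ω + c} = μ.map (fun ω ↦ (X ω, Y ω)) {p | p.2 ≤ p.1 + c} :=
        (Measure.map_apply (hX.prodMk hY) hS).symm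
    _ = (μ.map X).prod (μ.map Y) {p | p.2 ≤ p.1 + c} := by
        rw [(indepFun_iff_map_prod_eq_prod_map_map hX.aemeasurable hY.aemeasurable).1 hXY]
    _ = ∫⁻ x, μ.map Y (Iic (x + c)) ∂μ.map X := Measure.prod_apply hS

theorem gumbel_max_two {Ω : Type*} [MeasureSpace Ω]
    [IsProbabilityMeasure (volume : Measure Ω)] (G₁ G₂ : Ω → ℝ)
    (hG₁ : Measurable G₁) (hG₂ : Measurable G₂)
    (hindep : IndepFun G₁ G₂ volume)
    (hlaw₁ : Measure.map G₁ volume = gumbel) (hlaw₂ : Measure.map G₂ volume = gumbel)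
    (a₁ a₂ : ℝ) :
    ((volume : Measure Ω) {ω | a₂ + G₂ ω ≤ a₁ + G₁ ω}).toReal
      = Real.exp a₁ / (Real.exp a₁ + Real.exp a₂) := by
  have hevent : {ω | a₂ + G₂ ω ≤ a₁ + G₁ ω} = {ω | G₂ ω ≤ G₁ ω + (a₁ - a₂)} := by
    ext ω
    simp only [mem_ofPred_eq]
    constructor <;> intro h <;> linarith
  rw [hevent, measure_le_add_eq_lintegral_of_indepFun hG₁ hG₂ hindep, hlaw₁, hlaw₂,
    lintegral_gumbel_Iic_add, ENNReal.toReal_ofReal (by positivity), neg_sub, exp_sub]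
  field_simp
end

section
/- Fix γ ∈ (0, 1/2) and A > 0, and for λ > 0 and u ≥ 0 define ψ^λ(u) = (A/λ)·((λ + uλ²)^γ − λ^γ). Then there exists λ₀ > 0 such that for all u > 1 and all λ > λ₀, the derivative of λ ↦ ψ^λ(u) is strictly negative; moreover (d/dλ)ψ^λ(u) = (A/λ²)·((1−γ)λ^γ − (1−2γ)(λ + uλ²)^γ − γλ(λ + uλ²)^{γ−1}). -/
/-! For `u ≥ 1` we have `λ + uλ² ≥ λ²`, so in the bracket of the derivative
`(1 - 2γ)(λ + uλ²)^γ ≥ (1 - 2γ)λ^{2γ}`, which beats `(1 - γ)λ^γ` as soon as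
`λ^γ > (1 - γ)/(1 - 2γ)`; the remaining term is negative. -/

open Real

theorem hasDerivAt_div_mul_rpow_sub_rpow (γ A u : ℝ) {l : ℝ} (hl : l ≠ 0)
    (hP : l + u * l ^ 2 ≠ 0) :
    HasDerivAt (fun lam : ℝ => (A / lam) * ((lam + u * lam ^ 2) ^ γ - lam ^ γ))
      (A / l ^ 2 * ((1 - γ) * l ^ γ - (1 - 2 * γ) * (l + u * l ^ 2) ^ γ
        - γ * l * (l + u * l ^ 2) ^ (γ - 1))) l := by
  have hquad : HasDerivAt (fun lam : ℝ => lam + u * lam ^ 2) (1 + u * (2 * l)) l :=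
    ((hasDerivAt_id' l).add ((hasDerivAt_pow 2 l).const_mul u)).congr_deriv (by simp)
  have hpow : HasDerivAt (fun lam : ℝ => (lam + u * lam ^ 2) ^ γ)
      ((1 + u * (2 * l)) * γ * (l + u * l ^ 2) ^ (γ - 1)) l :=
    hquad.rpow_const (Or.inl hP)
  have hinv : HasDerivAt (fun lam : ℝ => A / lam) (A * -(l ^ 2)⁻¹) l :=
    (hasDerivAt_inv hl).const_mul A
  refine (hinv.mul (hpow.sub (hasDerivAt_rpow_const (p := γ) (Or.inl hl)))).congr_deriv ?_
  have hPγ : (l + u * l ^ 2) ^ γ = (l + u * l ^ 2) ^ (γ - 1) * (l + u * l ^ 2) := by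
    rw [← rpow_add_one hP, sub_add_cancel]
  have hlγ : l ^ γ = l ^ (γ - 1) * l := by rw [← rpow_add_one hl, sub_add_cancel]
  simp only [Pi.sub_apply, hPγ, hlγ]
  field_simp
  ring

theorem one_sub_mul_rpow_sub_lt_zero {γ u l : ℝ} (hγ0 : 0 < γ) (hγ2 : γ < 1 / 2)
    (hu : 1 ≤ u) (hl : 0 < l) (hlγ : (1 - γ) / (1 - 2 * γ) < l ^ γ) :
    (1 - γ) * l ^ γ - (1 - 2 * γ) * (l + u * l ^ 2) ^ γ
      - γ * l * (l + u * l ^ 2) ^ (γ - 1) < 0 := by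
  have h2γ : 0 < 1 - 2 * γ := by linarith
  have hP : 0 < l + u * l ^ 2 := by positivity
  have hlγ_pos : 0 < l ^ γ := rpow_pos_of_pos hl γ
  have hsq_le : (l ^ γ) ^ 2 ≤ (l + u * l ^ 2) ^ γ := by
    rw [rpow_pow_comm hl.le]
    exact rpow_le_rpow (by positivity) (by nlinarith) hγ0.le
  have hlin : (1 - γ) * l ^ γ < (1 - 2 * γ) * (l ^ γ) ^ 2 := by
    have := mul_lt_mul_of_pos_left ((div_lt_iff₀ h2γ).mp hlγ) hlγ_pos
    linarith
  have hlast : 0 < γ * l * (l + u * l ^ 2) ^ (γ - 1) := by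
    have := rpow_pos_of_pos hP (γ - 1)
    positivity
  linarith [mul_le_mul_of_nonneg_left hsq_le h2γ.le]

theorem psi_lambda_deriv (γ A : ℝ) (hγ : γ ∈ Set.Ioo (0 : ℝ) (1/2)) (hA : 0 < A) :
    (∀ u ≥ (0 : ℝ), ∀ l > (0 : ℝ),
      HasDerivAt (fun lam : ℝ => (A / lam) * ((lam + u * lam ^ 2) ^ γ - lam ^ γ))
        (A / l ^ 2 * ((1 - γ) * l ^ γ - (1 - 2 * γ) * (l + u * l ^ 2) ^ γ
          - γ * l * (l + u * l ^ 2) ^ (γ - 1))) l) ∧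
    ∃ l₀ > (0 : ℝ), ∀ u > (1 : ℝ), ∀ l > l₀,
      A / l ^ 2 * ((1 - γ) * l ^ γ - (1 - 2 * γ) * (l + u * l ^ 2) ^ γ
        - γ * l * (l + u * l ^ 2) ^ (γ - 1)) < 0 := by
  obtain ⟨hγ0, hγ2⟩ := hγ
  refine ⟨fun u hu l hl => hasDerivAt_div_mul_rpow_sub_rpow γ A u hl.ne' (by positivity), ?_⟩
  have hc : 0 < (1 - γ) / (1 - 2 * γ) := div_pos (by linarith) (by linarith)
  refine ⟨((1 - γ) / (1 - 2 * γ)) ^ γ⁻¹, rpow_pos_of_pos hc _, fun u hu l hl => ?_⟩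
  have hl0 : 0 < l := (rpow_pos_of_pos hc _).trans hl
  have hlγ := (rpow_inv_lt_iff_of_pos hc.le hl0.le hγ0).mp hl
  exact mul_neg_of_pos_of_neg (by positivity)
    (one_sub_mul_rpow_sub_lt_zero hγ0 hγ2 hu.le hl0 hlγ)
end
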